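/- arXiv:2303.06886 — 6 statements merged into one kernel-verified Lean document; each statement's English description precedes it below -/
import Mathlib

section
/- Let P : [0,∞) → ℝ be continuously differentiable with P(0) = 0, P'(Z) > 0 for all Z ≥ 0, and (5/3)P(Z) − Z P'(Z) > 0 for all Z > 0, and let 𝒮 : (0,∞) → ℝ be differentiable with 𝒮'(Z) = −(3/2)·((5/3)P(Z) − Z P'(Z))/Z² and lim_{Z→∞} 𝒮(Z) = 0. Then 𝒮(Z) > 0 for every Z > 0, and, setting M₁ := sup_{Z∈[0,1]} P'(Z) (finite since P' is continuous), one has 𝒮(Z) ≤ 𝒮(1) + (5/2)·M₁·max(0, −log Z) for all Z ∈ (0,1]; in particular there exists c > 0 such that 0 ≤ 𝒮(Z) ≤ c·(1 + max(0, −log Z)) for all Z > 0. -/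
/-!
`𝒮' = -(3/2)((5/3)P - ZP')/Z² < 0`, so `𝒮` is strictly decreasing, and since it tends to `0` at
infinity it is positive. On `(0,1]` the mean value theorem gives `P(Z) ≤ M₁ Z` (as `P(0) = 0`),
hence `𝒮'(Z) ≥ -(5/2) M₁ / Z`; integrating from `Z` to `1` yields the logarithmic bound.
For `Z > 1` monotonicity gives `𝒮(Z) < 𝒮(1)`, so `c = 𝒮(1) + (5/2) M₁` works.
-/

open Set Filter Topology Real

lemma StrictAntiOn.pos_of_tendsto_atTop_zero {f : ℝ → ℝ} {a x : ℝ} (hf : StrictAntiOn f (Ioi a))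
    (hlim : Tendsto f atTop (𝓝 0)) (hx : a < x) : 0 < f x := by
  have hx1 : a < x + 1 := by linarith
  have h_nonneg : 0 ≤ f (x + 1) :=
    le_of_tendsto hlim <| (eventually_ge_atTop (x + 1)).mono fun y hy =>
      hf.antitoneOn hx1 (hx1.trans_le hy) hy
  exact h_nonneg.trans_lt (hf hx hx1 (by linarith))

lemma le_add_mul_log_sub_log_of_hasDerivAt {f f' : ℝ → ℝ} {C x y : ℝ} (hx : 0 < x) (hxy : x ≤ y)
    (hf : ∀ z ∈ Icc x y, HasDerivAt f (f' z) z) (hf' : ∀ z ∈ Ioo x y, -C / z ≤ f' z) :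
    f x ≤ f y + C * (log y - log x) := by
  have hlog : ∀ z ∈ Icc x y, HasDerivAt (fun z => C * log z) (C * z⁻¹) z := fun z hz =>
    (hasDerivAt_log (hx.trans_le hz.1).ne').const_mul C
  have hmono : MonotoneOn (fun z => f z + C * log z) (Icc x y) := by
    refine monotoneOn_of_hasDerivWithinAt_nonneg (f' := fun z => f' z + C * z⁻¹)
      (convex_Icc x y) (fun z hz => ((hf z hz).add (hlog z hz)).continuousAt.continuousWithinAt)
      (fun z hz => ?_) (fun z hz => ?_) <;> rw [interior_Icc] at hz
    · exact ((hf z (Ioo_subset_Icc_self hz)).add (hlog z (Ioo_subset_Icc_self hz))).hasDerivWithinAt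
    · have := hf' z hz
      rw [neg_div, div_eq_mul_inv] at this
      linarith
  have := hmono ⟨le_rfl, hxy⟩ ⟨hxy, le_rfl⟩ hxy
  linarith

lemma ContDiffOn.le_mul_of_derivWithin_Ici_le {P : ℝ → ℝ} (hP : ContDiffOn ℝ 1 P (Ici 0))
    (hP0 : P 0 = 0) {M x : ℝ} (hx : 0 ≤ x) (hM : ∀ z ∈ Ioo 0 x, derivWithin P (Ici 0) z ≤ M) :
    P x ≤ M * x := by
  have hPD : ∀ z ∈ Ioo 0 x, HasDerivAt P (derivWithin P (Ici 0) z) z := fun z hz =>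
    (hP.differentiableOn one_ne_zero z (le_of_lt hz.1)).hasDerivWithinAt.hasDerivAt
      (Ici_mem_nhds hz.1)
  have := (convex_Icc 0 x).image_sub_le_mul_sub_of_deriv_le
    (hP.continuousOn.mono Icc_subset_Ici_self)
    (fun z hz => (hPD z (by rwa [interior_Icc] at hz)).differentiableAt.differentiableWithinAt)
    (fun z hz => by rw [interior_Icc] at hz; rw [(hPD z hz).deriv]; exact hM z hz)
    0 (left_mem_Icc.2 hx) x (right_mem_Icc.2 hx) hx
  simpa [hP0] using this

lemma neg_div_le_entropy_deriv {p d z M : ℝ} (hz : 0 < z) (hp : p ≤ M * z) (hd : 0 ≤ d) :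
    -(5 / 2 * M) / z ≤ -(3 / 2) * ((5 / 3) * p - z * d) / z ^ 2 := by
  have h : -(5 / 2 * M) / z = -(5 / 2 * M * z) / z ^ 2 := by field_simp
  rw [h]
  exact div_le_div_of_nonneg_right (by nlinarith) (by positivity)

lemma exists_pos_le_mul_one_add_max_neg_log {S : ℝ → ℝ} {K : ℝ} (hK : 0 ≤ K)
    (hpos : ∀ Z, 0 < Z → 0 < S Z) (hanti : AntitoneOn S (Ioi 0))
    (hlog : ∀ Z, 0 < Z → Z ≤ 1 → S Z ≤ S 1 + K * max 0 (-log Z)) :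
    ∃ c, 0 < c ∧ ∀ Z, 0 < Z → 0 ≤ S Z ∧ S Z ≤ c * (1 + max 0 (-log Z)) := by
  have hS1 := hpos 1 one_pos
  refine ⟨S 1 + K, by linarith, fun Z hZ => ⟨(hpos Z hZ).le, ?_⟩⟩
  have hm : 0 ≤ max 0 (-log Z) := le_max_left _ _
  have h : S Z ≤ S 1 + K * max 0 (-log Z) := by
    rcases le_or_gt Z 1 with hZ1 | hZ1
    · exact hlog Z hZ hZ1
    · nlinarith [hanti (mem_Ioi.2 one_pos) (mem_Ioi.2 hZ) hZ1.le]
  nlinarith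

/-- Under the hypotheses (w2), (w6) and the Third law (w7)
(`𝒮(Z) → 0` as `Z → ∞`), the entropy profile `𝒮` is positive on `(0,∞)`, satisfies
`𝒮 Z ≤ 𝒮 1 + (5/2) M₁ max(0, -log Z)` on `(0,1]` with `M₁ = sup_{[0,1]} P'`, and in
particular `0 ≤ 𝒮 Z ≤ c (1 + max(0, -log Z))` on `(0,∞)` for some `c > 0`. -/
theorem stmt2 (P S : ℝ → ℝ)
    (hP : ContDiffOn ℝ 1 P (Set.Ici 0))
    (hP0 : P 0 = 0)
    (hP' : ∀ Z : ℝ, 0 ≤ Z → 0 < derivWithin P (Set.Ici 0) Z)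
    (hPZ : ∀ Z : ℝ, 0 < Z → 0 < (5 / 3) * P Z - Z * derivWithin P (Set.Ici 0) Z)
    (hS : ∀ Z : ℝ, 0 < Z →
      HasDerivAt S (-(3 / 2) * ((5 / 3) * P Z - Z * derivWithin P (Set.Ici 0) Z) / Z ^ 2) Z)
    (hS0 : Tendsto S atTop (𝓝 0)) :
    (∀ Z : ℝ, 0 < Z → 0 < S Z) ∧
    (∀ Z : ℝ, 0 < Z → Z ≤ 1 →
      S Z ≤ S 1 + (5 / 2) * sSup ((fun Z => derivWithin P (Set.Ici 0) Z) '' Set.Icc 0 1) *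
        max 0 (-Real.log Z)) ∧
    ∃ c : ℝ, 0 < c ∧ ∀ Z : ℝ, 0 < Z →
      0 ≤ S Z ∧ S Z ≤ c * (1 + max 0 (-Real.log Z)) := by
  set M₁ := sSup ((fun Z => derivWithin P (Ici 0) Z) '' Icc 0 1)
  have hM₁ : ∀ z ∈ Icc (0 : ℝ) 1, derivWithin P (Ici 0) z ≤ M₁ := fun z hz =>
    le_csSup (isCompact_Icc.image_of_continuousOn ((hP.continuousOn_derivWithin
      (uniqueDiffOn_Ici 0) le_rfl).mono Icc_subset_Ici_self)).bddAbove (mem_image_of_mem _ hz)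
  have hM₁_nonneg : 0 ≤ M₁ := (hP' 0 le_rfl).le.trans (hM₁ 0 ⟨le_rfl, zero_le_one⟩)
  have hS_anti : StrictAntiOn S (Ioi 0) :=
    strictAntiOn_of_hasDerivWithinAt_neg (convex_Ioi 0)
      (fun x hx => (hS x hx).continuousAt.continuousWithinAt)
      (fun x hx => (hS x (by simpa using hx)).hasDerivWithinAt)
      (fun x hx => div_neg_of_neg_of_pos (by nlinarith [hPZ x (by simpa using hx)])
        (by simp only [interior_Ioi, mem_Ioi] at hx; positivity))
  have hS_pos : ∀ Z, 0 < Z → 0 < S Z := fun Z hZ => hS_anti.pos_of_tendsto_atTop_zero hS0 hZ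
  have hP_le : ∀ z ∈ Icc (0 : ℝ) 1, P z ≤ M₁ * z := fun z hz =>
    hP.le_mul_of_derivWithin_Ici_le hP0 hz.1 fun w hw =>
      hM₁ w ⟨hw.1.le, hw.2.le.trans hz.2⟩
  have hS_log : ∀ Z, 0 < Z → Z ≤ 1 → S Z ≤ S 1 + 5 / 2 * M₁ * max 0 (-log Z) := by
    intro Z hZ hZ1
    have := le_add_mul_log_sub_log_of_hasDerivAt hZ hZ1 (fun z hz => hS z (hZ.trans_le hz.1))
      fun z hz => neg_div_le_entropy_deriv (hZ.trans hz.1)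
        (hP_le z ⟨(hZ.trans hz.1).le, hz.2.le⟩) (hP' z (hZ.trans hz.1).le).le
    rwa [log_one, zero_sub, ← max_eq_right (neg_nonneg.2 (log_nonpos hZ.le hZ1))] at this
  exact ⟨hS_pos, hS_log, exists_pos_le_mul_one_add_max_neg_log (by positivity) hS_pos
    hS_anti.antitoneOn hS_log⟩
end

section
/- Let P : [0,∞) → ℝ be continuously differentiable with P(0) = 0, P'(Z) > 0 for all Z ≥ 0, (5/3)P(Z) − Z P'(Z) > 0 for all Z > 0, and p_∞ := lim_{Z→∞} P(Z)/Z^{5/3} > 0, and let a > 0. Define p(ρ,θ) = θ^{5/2} P(ρ θ^{−3/2}) + (a/3)θ⁴ for ρ ≥ 0, θ > 0. Then there exist constants c₁, c₂ > 0 such that c₁·(ρ^{5/3} + θ⁴) ≤ p(ρ,θ) ≤ c₂·(1 + ρ^{5/3} + θ⁴) for all ρ ≥ 0 and θ > 0. -/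
open Set Filter Topology

/-!
Write `Z = ρ θ^(-3/2)`, so that `θ^(5/2) Z^(5/3) = ρ^(5/3)`. The hypothesis
`(5/3) P - Z P' > 0` makes `P(Z) / Z^(5/3)` strictly decreasing on `(0, ∞)`;
it therefore stays above its limit `p∞`, giving `P(Z) ≥ p∞ Z^(5/3)`, and for `Z ≥ 1` below its
value `P(1)` at `1`, giving `P(Z) ≤ P(1) Z^(5/3)`. On `[0, 1]` the continuous `P` is bounded.
Multiplying by `θ^(5/2)` and using `θ^(5/2) ≤ 1 + θ⁴` gives both bounds.
-/

theorem strictAntiOn_div_rpow_of_mul_deriv_lt {f : ℝ → ℝ} {r : ℝ}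
    (hf : DifferentiableOn ℝ f (Ioi 0)) (h : ∀ x, 0 < x → x * deriv f x < r * f x) :
    StrictAntiOn (fun x => f x / x ^ r) (Ioi 0) := by
  have hderiv : ∀ x, 0 < x → HasDerivAt (fun x => f x / x ^ r)
      ((deriv f x * x ^ r - f x * (r * x ^ (r - 1))) / (x ^ r) ^ 2) x := fun x hx =>
    (hf.differentiableAt (Ioi_mem_nhds hx)).hasDerivAt.div
      (Real.hasDerivAt_rpow_const (Or.inl hx.ne')) (by positivity)
  refine strictAntiOn_of_deriv_neg (convex_Ioi 0)
    (fun x hx => (hderiv x hx).continuousAt.continuousWithinAt) fun x hx => ?_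
  rw [interior_Ioi] at hx
  have hx : 0 < x := hx
  have hnum : deriv f x * x ^ r - f x * (r * x ^ (r - 1)) =
      x ^ (r - 1) * (x * deriv f x - r * f x) := by
    rw [Real.rpow_sub_one hx.ne']
    field_simp
  rw [(hderiv x hx).deriv, hnum]
  exact div_neg_of_neg_of_pos (mul_neg_of_pos_of_neg (by positivity) (sub_neg.2 (h x hx)))
    (by positivity)

theorem le_of_tendsto_of_antitoneOn_Ici {g : ℝ → ℝ} {L x : ℝ} (hg : AntitoneOn g (Ici x))
    (hlim : Tendsto g atTop (𝓝 L)) : L ≤ g x :=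
  le_of_tendsto hlim <| by
    filter_upwards [eventually_ge_atTop x] with y hy using hg self_mem_Ici hy hy

theorem mul_rpow_le_of_tendsto_div_rpow {f : ℝ → ℝ} {r L x : ℝ} (hr : r ≠ 0) (h0 : f 0 = 0)
    (hanti : AntitoneOn (fun x => f x / x ^ r) (Ioi 0))
    (hlim : Tendsto (fun x => f x / x ^ r) atTop (𝓝 L)) (hx : 0 ≤ x) :
    L * x ^ r ≤ f x := by
  rcases hx.eq_or_lt with rfl | hx
  · simp [h0, Real.zero_rpow hr]
  · exact (le_div_iff₀ (by positivity)).1 <|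
      le_of_tendsto_of_antitoneOn_Ici (g := fun x => f x / x ^ r)
        (hanti.mono (Ici_subset_Ioi.2 hx)) hlim

theorem exists_le_mul_one_add_rpow {f : ℝ → ℝ} {r : ℝ} (hf : ContinuousOn f (Icc 0 1))
    (hanti : AntitoneOn (fun x => f x / x ^ r) (Ici 1)) :
    ∃ C, 0 ≤ C ∧ ∀ x, 0 ≤ x → f x ≤ C * (1 + x ^ r) := by
  obtain ⟨M, hM⟩ := isCompact_Icc.exists_bound_of_continuousOn hf
  have hM0 : 0 ≤ M := (norm_nonneg _).trans (hM 0 ⟨le_rfl, zero_le_one⟩)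
  refine ⟨max M (f 1), le_max_of_le_left hM0, fun x hx => ?_⟩
  have hxr : 0 ≤ x ^ r := Real.rpow_nonneg hx r
  have hCM := le_max_left M (f 1)
  rcases le_total x 1 with hx1 | hx1
  · have hfM : f x ≤ M := (le_abs_self _).trans (hM x ⟨hx, hx1⟩)
    nlinarith
  · have hf1 : f x / x ^ r ≤ f 1 / 1 ^ r := hanti self_mem_Ici hx1 hx1
    rw [Real.one_rpow, div_one, div_le_iff₀ (by positivity)] at hf1
    nlinarith [le_max_right M (f 1)]

theorem rpow_mul_mul_mul_rpow_neg_rpow {θ ρ : ℝ} (hθ : 0 < θ) (hρ : 0 ≤ ρ) (s r : ℝ) :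
    θ ^ (s * r) * (ρ * θ ^ (-s)) ^ r = ρ ^ r := by
  rw [Real.mul_rpow hρ (Real.rpow_nonneg hθ.le _), ← Real.rpow_mul hθ.le, neg_mul,
    Real.rpow_neg hθ.le]
  field_simp

theorem rpow_le_one_add_pow {θ s : ℝ} {n : ℕ} (hθ : 0 ≤ θ) (hs : 0 ≤ s) (hsn : s ≤ n) :
    θ ^ s ≤ 1 + θ ^ n := by
  rcases le_total θ 1 with h | h
  · linarith [Real.rpow_le_one hθ h hs, pow_nonneg hθ n]
  · have := Real.rpow_le_rpow_of_exponent_le h hsn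
    rw [Real.rpow_natCast] at this
    linarith

theorem rpow_five_halves_mul_scaled_rpow {θ ρ : ℝ} (hθ : 0 < θ) (hρ : 0 ≤ ρ) :
    θ ^ ((5 : ℝ) / 2) * (ρ * θ ^ (-(3 : ℝ) / 2)) ^ ((5 : ℝ) / 3) = ρ ^ ((5 : ℝ) / 3) := by
  have h := rpow_mul_mul_mul_rpow_neg_rpow hθ hρ (3 / 2) (5 / 3)
  rwa [show (3 : ℝ) / 2 * (5 / 3) = 5 / 2 by norm_num, show -((3 : ℝ) / 2) = -3 / 2 by norm_num]
    at h

theorem mul_rpow_le_rpow_mul_scaled {P : ℝ → ℝ} {L ρ θ : ℝ}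
    (hlow : ∀ Z, 0 ≤ Z → L * Z ^ ((5 : ℝ) / 3) ≤ P Z) (hρ : 0 ≤ ρ) (hθ : 0 < θ) :
    L * ρ ^ ((5 : ℝ) / 3) ≤ θ ^ ((5 : ℝ) / 2) * P (ρ * θ ^ (-(3 : ℝ) / 2)) :=
  calc L * ρ ^ ((5 : ℝ) / 3)
      = θ ^ ((5 : ℝ) / 2) * (L * (ρ * θ ^ (-(3 : ℝ) / 2)) ^ ((5 : ℝ) / 3)) := by
        rw [← rpow_five_halves_mul_scaled_rpow hθ hρ]
        ring
    _ ≤ θ ^ ((5 : ℝ) / 2) * P (ρ * θ ^ (-(3 : ℝ) / 2)) :=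
        mul_le_mul_of_nonneg_left (hlow _ (by positivity)) (by positivity)

theorem rpow_mul_scaled_le_mul {P : ℝ → ℝ} {C ρ θ : ℝ} (hC : 0 ≤ C)
    (hup : ∀ Z, 0 ≤ Z → P Z ≤ C * (1 + Z ^ ((5 : ℝ) / 3))) (hρ : 0 ≤ ρ) (hθ : 0 < θ) :
    θ ^ ((5 : ℝ) / 2) * P (ρ * θ ^ (-(3 : ℝ) / 2)) ≤ C * (1 + ρ ^ ((5 : ℝ) / 3) + θ ^ 4) := by
  have hθ4 : θ ^ ((5 : ℝ) / 2) ≤ 1 + θ ^ 4 :=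
    rpow_le_one_add_pow (n := 4) hθ.le (by norm_num) (by norm_num)
  calc θ ^ ((5 : ℝ) / 2) * P (ρ * θ ^ (-(3 : ℝ) / 2))
      ≤ θ ^ ((5 : ℝ) / 2) * (C * (1 + (ρ * θ ^ (-(3 : ℝ) / 2)) ^ ((5 : ℝ) / 3))) :=
        mul_le_mul_of_nonneg_left (hup _ (by positivity)) (by positivity)
    _ = C * (θ ^ ((5 : ℝ) / 2) + ρ ^ ((5 : ℝ) / 3)) := by
        rw [← rpow_five_halves_mul_scaled_rpow hθ hρ]
        ring
    _ ≤ C * (1 + ρ ^ ((5 : ℝ) / 3) + θ ^ 4) := mul_le_mul_of_nonneg_left (by linarith) hC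

theorem stmt3_general (P : ℝ → ℝ) (a pinf : ℝ)
    (hP : ContDiffOn ℝ 1 P (Set.Ici 0))
    (hP0 : P 0 = 0)
    (hPZ : ∀ Z : ℝ, 0 < Z → 0 < (5 / 3) * P Z - Z * derivWithin P (Set.Ici 0) Z)
    (hlim : Tendsto (fun Z : ℝ => P Z / Z ^ ((5 : ℝ) / 3)) atTop (𝓝 pinf))
    (hpinf : 0 < pinf) (ha : 0 < a) :
    ∃ c₁ c₂ : ℝ, 0 < c₁ ∧ 0 < c₂ ∧ ∀ ρ θ : ℝ, 0 ≤ ρ → 0 < θ →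
      c₁ * (ρ ^ ((5 : ℝ) / 3) + θ ^ 4) ≤
          θ ^ ((5 : ℝ) / 2) * P (ρ * θ ^ (-(3 : ℝ) / 2)) + a / 3 * θ ^ 4 ∧
      θ ^ ((5 : ℝ) / 2) * P (ρ * θ ^ (-(3 : ℝ) / 2)) + a / 3 * θ ^ 4 ≤
          c₂ * (1 + ρ ^ ((5 : ℝ) / 3) + θ ^ 4) := by
  have hanti : StrictAntiOn (fun Z => P Z / Z ^ ((5 : ℝ) / 3)) (Ioi 0) := by
    refine strictAntiOn_div_rpow_of_mul_deriv_lt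
      ((hP.differentiableOn one_ne_zero).mono Ioi_subset_Ici_self) fun Z hZ => ?_
    have h := hPZ Z hZ
    rw [derivWithin_of_mem_nhds (Ici_mem_nhds hZ)] at h
    linarith
  have hlow : ∀ Z, 0 ≤ Z → pinf * Z ^ ((5 : ℝ) / 3) ≤ P Z := fun Z hZ =>
    mul_rpow_le_of_tendsto_div_rpow (by norm_num) hP0 hanti.antitoneOn hlim hZ
  obtain ⟨C, hC, hup⟩ := exists_le_mul_one_add_rpow (hP.continuousOn.mono Icc_subset_Ici_self)
    (hanti.antitoneOn.mono (Ici_subset_Ioi.2 one_pos))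
  refine ⟨min pinf (a / 3), C + a / 3, lt_min hpinf (by positivity), by positivity,
    fun ρ θ hρ hθ => ⟨?_, ?_⟩⟩
  · have hP_low := mul_rpow_le_rpow_mul_scaled hlow hρ hθ
    nlinarith [min_le_left pinf (a / 3), min_le_right pinf (a / 3),
      Real.rpow_nonneg hρ ((5 : ℝ) / 3), pow_pos hθ 4]
  · have hP_up := rpow_mul_scaled_le_mul hC hup hρ hθ
    nlinarith [Real.rpow_nonneg hρ ((5 : ℝ) / 3), pow_pos hθ 4]

/-- Two-sided bound (second line of (ww)) for the full pressure
`p(ρ,θ) = θ^(5/2) P(ρ θ^(-3/2)) + (a/3) θ⁴` under the structural hypotheses (w2)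
and the degenerate-regime hypothesis (w3): `p∞ = lim_{Z→∞} P Z / Z^(5/3) > 0`. -/
theorem stmt3 (P : ℝ → ℝ) (a pinf : ℝ)
    (hP : ContDiffOn ℝ 1 P (Set.Ici 0))
    (hP0 : P 0 = 0)
    (hP' : ∀ Z : ℝ, 0 ≤ Z → 0 < derivWithin P (Set.Ici 0) Z)
    (hPZ : ∀ Z : ℝ, 0 < Z → 0 < (5 / 3) * P Z - Z * derivWithin P (Set.Ici 0) Z)
    (hlim : Tendsto (fun Z : ℝ => P Z / Z ^ ((5 : ℝ) / 3)) atTop (𝓝 pinf))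
    (hpinf : 0 < pinf) (ha : 0 < a) :
    ∃ c₁ c₂ : ℝ, 0 < c₁ ∧ 0 < c₂ ∧ ∀ ρ θ : ℝ, 0 ≤ ρ → 0 < θ →
      c₁ * (ρ ^ ((5 : ℝ) / 3) + θ ^ 4) ≤
          θ ^ ((5 : ℝ) / 2) * P (ρ * θ ^ (-(3 : ℝ) / 2)) + a / 3 * θ ^ 4 ∧
      θ ^ ((5 : ℝ) / 2) * P (ρ * θ ^ (-(3 : ℝ) / 2)) + a / 3 * θ ^ 4 ≤
          c₂ * (1 + ρ ^ ((5 : ℝ) / 3) + θ ^ 4) :=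
  stmt3_general P a pinf hP hP0 hPZ hlim hpinf ha
end

section
/- Let e : (0,∞)² → ℝ be continuously differentiable and satisfy the first-order partial differential equation ρ·∂e/∂ρ(ρ,θ) + (2/3)·θ·∂e/∂θ(ρ,θ) = (2/3)·e(ρ,θ) for all ρ, θ > 0. Then, defining P(Z) := (2/3)·Z·e(Z,1) for Z > 0, one has e(ρ,θ) = (3/2)·(θ^{5/2}/ρ)·P(ρ θ^{−3/2}) for all ρ, θ > 0. -/
/-! Writing `e` along the curves `s ↦ (s ρ, s^α θ)`, the PDE `ρ ∂_ρ e + α θ ∂_θ e = β e`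
becomes Euler's equation `s h' = β h`, whose solutions on `(0, ∞)` are `h s = s^β h 1`. With
`α = β = 2/3`, the scaling `s = θ^(3/2)` moves `(ρ θ^(-3/2), 1)` to `(ρ, θ)`, so
`e(ρ, θ) = θ e(ρ θ^(-3/2), 1)`. -/

open Set

section EulerPDE

variable {E : Type*} [NormedAddCommGroup E] [NormedSpace ℝ E]

theorem hasDerivAt_comp_of_partials {f : ℝ → ℝ → E} {u v : ℝ → ℝ} {u' v' s : ℝ}
    (hf : DifferentiableAt ℝ (fun q : ℝ × ℝ => f q.1 q.2) (u s, v s))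
    (hu : HasDerivAt u u' s) (hv : HasDerivAt v v' s) :
    HasDerivAt (fun t => f (u t) (v t))
      (u' • deriv (fun r => f r (v s)) (u s) + v' • deriv (fun r => f (u s) r) (v s)) s := by
  set L := fderiv ℝ (fun q : ℝ × ℝ => f q.1 q.2) (u s, v s)
  have hL : HasFDerivAt (fun q : ℝ × ℝ => f q.1 q.2) L (u s, v s) := hf.hasFDerivAt
  have h₁ : deriv (fun r => f r (v s)) (u s) = L (1, 0) :=
    (hL.comp_hasDerivAt_of_eq (u s) ((hasDerivAt_id _).prodMk (hasDerivAt_const _ _)) rfl).deriv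
  have h₂ : deriv (fun r => f (u s) r) (v s) = L (0, 1) :=
    (hL.comp_hasDerivAt_of_eq (v s) ((hasDerivAt_const _ _).prodMk (hasDerivAt_id _)) rfl).deriv
  have hsplit : ((u', v') : ℝ × ℝ) = u' • ((1, 0) : ℝ × ℝ) + v' • ((0, 1) : ℝ × ℝ) := by
    simp
  rw [h₁, h₂, ← L.map_smul, ← L.map_smul, ← L.map_add, ← hsplit]
  exact hL.comp_hasDerivAt_of_eq s (hu.prodMk hv) rfl

theorem eq_rpow_smul_of_hasDerivAt_euler {h : ℝ → E} {β : ℝ}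
    (hh : ∀ s ∈ Ioi (0 : ℝ), HasDerivAt h (s⁻¹ • β • h s) s) {s : ℝ} (hs : 0 < s) :
    h s = s ^ β • h 1 := by
  have hderiv : ∀ t ∈ Ioi (0 : ℝ), HasDerivAt (fun t => t ^ (-β) • h t) 0 t := by
    intro t ht
    have ht' : t ≠ 0 := (mem_Ioi.1 ht).ne'
    convert (Real.hasDerivAt_rpow_const (p := -β) (Or.inl ht')).smul (hh t ht) using 1
    · rfl
    rw [Real.rpow_sub_one ht', smul_smul, smul_smul, ← add_smul]
    convert (zero_smul ℝ (h t)).symm using 2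
    ring
  have hconst := isOpen_Ioi.is_const_of_deriv_eq_zero isPreconnected_Ioi
    (fun t ht => (hderiv t ht).differentiableAt.differentiableWithinAt)
    (fun t ht => (hderiv t ht).deriv) hs (mem_Ioi.2 one_pos)
  simp only [Real.one_rpow, one_smul] at hconst
  rw [← hconst, smul_smul, ← Real.rpow_add hs, add_neg_cancel, Real.rpow_zero, one_smul]

theorem quasiHomogeneous_of_euler_pde {e : ℝ → ℝ → E} {α β : ℝ}
    (he : DifferentiableOn ℝ (fun q : ℝ × ℝ => e q.1 q.2) (Ioi 0 ×ˢ Ioi 0))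
    (hpde : ∀ ρ θ : ℝ, 0 < ρ → 0 < θ →
      ρ • deriv (fun r => e r θ) ρ + (α * θ) • deriv (fun t => e ρ t) θ = β • e ρ θ)
    {ρ θ s : ℝ} (hρ : 0 < ρ) (hθ : 0 < θ) (hs : 0 < s) :
    e (s * ρ) (s ^ α * θ) = s ^ β • e ρ θ := by
  have hcurve : ∀ t ∈ Ioi (0 : ℝ),
      HasDerivAt (fun t => e (t * ρ) (t ^ α * θ)) (t⁻¹ • β • e (t * ρ) (t ^ α * θ)) t := by
    intro t ht
    have ht' : t ≠ 0 := (mem_Ioi.1 ht).ne'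
    have hu : 0 < t * ρ := mul_pos ht hρ
    have hv : 0 < t ^ α * θ := mul_pos (Real.rpow_pos_of_pos ht α) hθ
    have hchain := hasDerivAt_comp_of_partials (u := (· * ρ)) (v := (· ^ α * θ)) (s := t)
      ((he (t * ρ, t ^ α * θ) ⟨hu, hv⟩).differentiableAt
        ((isOpen_Ioi.prod isOpen_Ioi).mem_nhds ⟨hu, hv⟩))
      (hasDerivAt_mul_const ρ) ((Real.hasDerivAt_rpow_const (Or.inl ht')).mul_const θ)
    convert hchain using 1
    rw [← hpde _ _ hu hv, smul_add, smul_smul, smul_smul, Real.rpow_sub_one ht']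
    congr 2 <;> field_simp
  simpa using eq_rpow_smul_of_hasDerivAt_euler hcurve hs

end EulerPDE

/-- If `e` is continuously differentiable on `(0,∞)²` and solves the
PDE `ρ ∂_ρ e + (2/3) θ ∂_θ e = (2/3) e` there, then with `P(Z) := (2/3) Z e(Z,1)` one
has `e(ρ,θ) = (3/2)(θ^(5/2)/ρ) P(ρ θ^(-3/2))` — the structural form (w1). -/
theorem stmt8 (e : ℝ → ℝ → ℝ)
    (he : ContDiffOn ℝ 1 (fun q : ℝ × ℝ => e q.1 q.2) (Set.Ioi 0 ×ˢ Set.Ioi 0))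
    (hpde : ∀ ρ θ : ℝ, 0 < ρ → 0 < θ →
      ρ * deriv (fun r => e r θ) ρ + (2 / 3) * θ * deriv (fun t => e ρ t) θ =
        (2 / 3) * e ρ θ) :
    ∀ ρ θ : ℝ, 0 < ρ → 0 < θ →
      e ρ θ = (3 / 2) * (θ ^ ((5 : ℝ) / 2) / ρ) *
        ((2 / 3) * (ρ * θ ^ (-(3 : ℝ) / 2)) * e (ρ * θ ^ (-(3 : ℝ) / 2)) 1) := by
  intro ρ θ hρ hθ
  have hscale := quasiHomogeneous_of_euler_pde (he.differentiableOn one_ne_zero) hpde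
    (mul_pos hρ (Real.rpow_pos_of_pos hθ (-(3 : ℝ) / 2))) one_pos
    (Real.rpow_pos_of_pos hθ ((3 : ℝ) / 2))
  have hρ_scaled : θ ^ ((3 : ℝ) / 2) * (ρ * θ ^ (-(3 : ℝ) / 2)) = ρ := by
    rw [mul_left_comm, ← Real.rpow_add hθ]
    norm_num
  have hθ_scaled : (θ ^ ((3 : ℝ) / 2)) ^ ((2 : ℝ) / 3) = θ := by
    rw [← Real.rpow_mul hθ.le]
    norm_num
  have hprefactor : θ ^ ((5 : ℝ) / 2) / ρ * (ρ * θ ^ (-(3 : ℝ) / 2)) = θ := by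
    field_simp
    rw [← Real.rpow_add hθ]
    norm_num
  rw [hρ_scaled, hθ_scaled, mul_one, smul_eq_mul] at hscale
  rw [hscale]
  linear_combination -e (ρ * θ ^ (-(3 : ℝ) / 2)) 1 * hprefactor
end

section
/- Let ω ∈ ℝ³ with ω ≠ 0, let 0 < r₁ < r₂, and let g : (r₁, r₂) → ℝ be differentiable with g'(r) ≠ 0 for all r ∈ (r₁, r₂). Define θ(x) = g(|x|) and c(x) = (1/2)|ω × x|² on the annulus A = {x ∈ ℝ³ : r₁ < |x| < r₂}. Then ∇c(x) = |ω|²·x − (ω·x)·ω for every x, and there exists x ∈ A such that ∇θ(x) × ∇c(x) ≠ 0. -/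
/-!
The gradient of the radial temperature `θ(x) = g(|x|)` is `(g'(|x|)/|x|) x`, and
`x × ∇c(x) = x × (|ω|² x - (ω·x) ω) = -(ω·x) (x × ω)`, so `∇θ(x) × ∇c(x)` is a nonzero
multiple of `x × ω` as soon as `ω·x ≠ 0`. By Lagrange's identity
`|x × ω|² = |x|²|ω|² - (x·ω)²`, so it remains to find `x` with `|x| = (r₁ + r₂)/2` that is
neither orthogonal nor parallel to `ω`: a rescaling of `ω + v` for any nonzero `v ⊥ ω` does.
-/

open Set Filter Topology

/-- The cross product on `ℝ³ = EuclideanSpace ℝ (Fin 3)`. -/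
noncomputable def cross3 (a b : EuclideanSpace ℝ (Fin 3)) : EuclideanSpace ℝ (Fin 3) :=
  (WithLp.equiv 2 (Fin 3 → ℝ)).symm
    ![a 1 * b 2 - a 2 * b 1, a 2 * b 0 - a 0 * b 2, a 0 * b 1 - a 1 * b 0]

open Module Matrix
open scoped RealInnerProductSpace

section InnerProductSpace

variable {F : Type*} [NormedAddCommGroup F] [InnerProductSpace ℝ F]

theorem exists_inner_ne_zero_sq_inner_lt [FiniteDimensional ℝ F] (h2 : 2 ≤ finrank ℝ F)
    {ω : F} (hω : ω ≠ 0) : ∃ p : F, ⟪p, ω⟫ ≠ 0 ∧ ⟪p, ω⟫ ^ 2 < ‖p‖ ^ 2 * ‖ω‖ ^ 2 := by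
  obtain ⟨v, hv, hv0⟩ : ∃ v ∈ (ℝ ∙ ω)ᗮ, v ≠ 0 := by
    refine Submodule.exists_mem_ne_zero_of_ne_bot fun h => ?_
    have := (ℝ ∙ ω).finrank_add_finrank_orthogonal
    rw [h, finrank_bot, finrank_span_singleton hω] at this
    omega
  have hvω : ⟪v, ω⟫ = 0 := Submodule.mem_orthogonal_singleton_iff_inner_left.1 hv
  have hω2 : 0 < ‖ω‖ ^ 2 := by positivity
  have hv2 : 0 < ‖v‖ ^ 2 := by positivity
  refine ⟨v + ω, ?_, ?_⟩ <;>
    simp only [inner_add_left, hvω, zero_add, real_inner_self_eq_norm_sq, norm_add_sq_real,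
      mul_zero, add_zero]
  · exact hω2.ne'
  · nlinarith

theorem exists_norm_eq_inner_ne_zero_sq_inner_lt [FiniteDimensional ℝ F]
    (h2 : 2 ≤ finrank ℝ F) {ω : F} (hω : ω ≠ 0) {r : ℝ} (hr : 0 < r) :
    ∃ x : F, ‖x‖ = r ∧ ⟪x, ω⟫ ≠ 0 ∧ ⟪x, ω⟫ ^ 2 < ‖x‖ ^ 2 * ‖ω‖ ^ 2 := by
  obtain ⟨p, hpω, hlt⟩ := exists_inner_ne_zero_sq_inner_lt h2 hω
  have hp : 0 < ‖p‖ := norm_pos_iff.2 fun h => hpω (by simp [h])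
  have ht : 0 < r / ‖p‖ := div_pos hr hp
  refine ⟨(r / ‖p‖) • p, ?_, ?_, ?_⟩
  · rw [norm_smul, Real.norm_of_nonneg ht.le, div_mul_cancel₀ _ hp.ne']
  · rw [real_inner_smul_left]; exact mul_ne_zero ht.ne' hpω
  · rw [real_inner_smul_left, norm_smul, Real.norm_of_nonneg ht.le, mul_pow, mul_pow,
      mul_assoc]
    exact mul_lt_mul_of_pos_left hlt (pow_pos ht 2)

variable [CompleteSpace F]

theorem HasDerivAt.comp_hasGradientAt {g : ℝ → ℝ} {g' : ℝ} {φ : F → ℝ} {φ' x : F}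
    (hg : HasDerivAt g g' (φ x)) (hφ : HasGradientAt φ φ' x) :
    HasGradientAt (fun y => g (φ y)) (g' • φ') x := by
  rw [hasGradientAt_iff_hasFDerivAt] at hφ ⊢
  refine (hg.comp_hasFDerivAt x hφ).congr_fderiv ?_
  ext y
  simp

theorem hasGradientAt_norm_sq (x : F) : HasGradientAt (fun y => ‖y‖ ^ 2) ((2 : ℝ) • x) x := by
  rw [hasGradientAt_iff_hasFDerivAt]
  refine (hasStrictFDerivAt_norm_sq x).hasFDerivAt.congr_fderiv ?_
  ext y
  simp

theorem hasGradientAt_norm {x : F} (hx : x ≠ 0) :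
    HasGradientAt (fun y : F => ‖y‖) (‖x‖⁻¹ • x) x := by
  have hx' : ‖x‖ ≠ 0 := norm_ne_zero_iff.2 hx
  have h := (Real.hasDerivAt_sqrt (pow_ne_zero 2 hx')).comp_hasGradientAt
    (φ := fun y : F => ‖y‖ ^ 2) (hasGradientAt_norm_sq x)
  simp only [Real.sqrt_sq (norm_nonneg _), smul_smul] at h
  convert h using 2
  field_simp

theorem hasGradientAt_comp_norm {g : ℝ → ℝ} {x : F} (hg : DifferentiableAt ℝ g ‖x‖)
    (hx : x ≠ 0) : HasGradientAt (fun y => g ‖y‖) ((deriv g ‖x‖ / ‖x‖) • x) x := by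
  simpa [smul_smul, div_eq_mul_inv] using
    hg.hasDerivAt.comp_hasGradientAt (hasGradientAt_norm hx)

-- `½|ω × y|²`, written through Lagrange's identity so that it makes sense in any inner
-- product space.
noncomputable def centrifugalPotential (ω y : F) : ℝ :=
  1 / 2 * (‖ω‖ ^ 2 * ‖y‖ ^ 2 - ⟪ω, y⟫ ^ 2)

theorem hasGradientAt_centrifugalPotential (ω x : F) :
    HasGradientAt (centrifugalPotential ω) (‖ω‖ ^ 2 • x - ⟪ω, x⟫ • ω) x := by
  have hnorm := (hasGradientAt_norm_sq x).hasFDerivAt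
  have hinner := ((innerSL ℝ ω).hasFDerivAt (x := x)).pow 2
  rw [hasGradientAt_iff_hasFDerivAt]
  refine (((hnorm.const_mul (‖ω‖ ^ 2)).sub hinner).const_mul (1 / 2)).congr_fderiv ?_
  ext y
  simp only [map_smul, map_sub, coe_innerSL_apply, InnerProductSpace.toDual_apply_apply,
    _root_.smul_apply, _root_.sub_apply, smul_eq_mul, nsmul_eq_mul, Nat.cast_ofNat,
    Nat.add_one_sub_one, pow_one]
  ring

end InnerProductSpace

theorem cross3_eq_crossProduct (a b : EuclideanSpace ℝ (Fin 3)) :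
    cross3 a b = WithLp.toLp 2 (a.ofLp ⨯₃ b.ofLp) := by
  simp [cross3, cross_apply]

theorem cross3_smul_left (c : ℝ) (a b : EuclideanSpace ℝ (Fin 3)) :
    cross3 (c • a) b = c • cross3 a b := by
  simp [cross3_eq_crossProduct]

theorem cross3_smul_right (c : ℝ) (a b : EuclideanSpace ℝ (Fin 3)) :
    cross3 a (c • b) = c • cross3 a b := by
  simp [cross3_eq_crossProduct]

theorem cross3_sub_right (a b c : EuclideanSpace ℝ (Fin 3)) :
    cross3 a (b - c) = cross3 a b - cross3 a c := by
  simp [cross3_eq_crossProduct]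

theorem cross3_self (a : EuclideanSpace ℝ (Fin 3)) : cross3 a a = 0 := by
  simp [cross3_eq_crossProduct]

theorem norm_cross3_sq (a b : EuclideanSpace ℝ (Fin 3)) :
    ‖cross3 a b‖ ^ 2 = ‖a‖ ^ 2 * ‖b‖ ^ 2 - ⟪a, b⟫ ^ 2 := by
  simp only [← real_inner_self_eq_norm_sq, EuclideanSpace.inner_eq_star_dotProduct,
    star_trivial, cross3_eq_crossProduct, cross_dot_cross, dotProduct_comm b.ofLp]
  ring

theorem cross3_smul_smul_sub_smul (a b c : ℝ) (x w : EuclideanSpace ℝ (Fin 3)) :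
    cross3 (a • x) (b • x - c • w) = -(a * c) • cross3 x w := by
  rw [cross3_smul_left, cross3_sub_right, cross3_smul_right, cross3_smul_right, cross3_self,
    smul_zero, zero_sub, smul_neg, smul_smul, neg_smul]

theorem cross3_ne_zero_of_sq_inner_lt {a b : EuclideanSpace ℝ (Fin 3)}
    (h : ⟪a, b⟫ ^ 2 < ‖a‖ ^ 2 * ‖b‖ ^ 2) : cross3 a b ≠ 0 := by
  rwa [← norm_ne_zero_iff, ← sq_pos_iff, norm_cross3_sq, sub_pos]

theorem hasGradientAt_half_norm_cross3_sq (ω x : EuclideanSpace ℝ (Fin 3)) :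
    HasGradientAt (fun y => 1 / 2 * ‖cross3 ω y‖ ^ 2) (‖ω‖ ^ 2 • x - ⟪ω, x⟫ • ω) x := by
  convert hasGradientAt_centrifugalPotential ω x using 2 with y
  rw [centrifugalPotential, norm_cross3_sq]

/-- For `ω ≠ 0`, the centrifugal potential `c(x) = (1/2)|ω × x|²`
has gradient `∇c(x) = |ω|² x - (ω·x) ω`, and a radially symmetric temperature
`θ(x) = g(|x|)` with `g' ≠ 0` on `(r₁,r₂)` has a point `x` in the annulus
`{r₁ < |x| < r₂}` where `∇θ(x) × ∇c(x) ≠ 0`. -/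
theorem stmt13 (ω : EuclideanSpace ℝ (Fin 3)) (hω : ω ≠ 0)
    (r₁ r₂ : ℝ) (hr₁ : 0 < r₁) (hr₁₂ : r₁ < r₂)
    (g : ℝ → ℝ)
    (hg : ∀ r ∈ Set.Ioo r₁ r₂, DifferentiableAt ℝ g r)
    (hg' : ∀ r ∈ Set.Ioo r₁ r₂, deriv g r ≠ 0) :
    (∀ x : EuclideanSpace ℝ (Fin 3),
      gradient (fun y : EuclideanSpace ℝ (Fin 3) => (1 / 2) * ‖cross3 ω y‖ ^ 2) x =
        ‖ω‖ ^ 2 • x - (@inner ℝ _ _ ω x) • ω) ∧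
    ∃ x : EuclideanSpace ℝ (Fin 3), (r₁ < ‖x‖ ∧ ‖x‖ < r₂) ∧
      cross3 (gradient (fun y : EuclideanSpace ℝ (Fin 3) => g ‖y‖) x)
        (gradient (fun y : EuclideanSpace ℝ (Fin 3) => (1 / 2) * ‖cross3 ω y‖ ^ 2) x) ≠ 0 := by
  refine ⟨fun x => (hasGradientAt_half_norm_cross3_sq ω x).gradient, ?_⟩
  obtain ⟨x, hxr, hxω, hlt⟩ := exists_norm_eq_inner_ne_zero_sq_inner_lt (by simp) hω
    (show 0 < (r₁ + r₂) / 2 by linarith)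
  have hx : ‖x‖ ∈ Ioo r₁ r₂ := by rw [hxr]; constructor <;> linarith
  have hx0 : x ≠ 0 := norm_pos_iff.1 (hr₁.trans hx.1)
  refine ⟨x, hx, ?_⟩
  rw [(hasGradientAt_comp_norm (hg _ hx) hx0).gradient,
    (hasGradientAt_half_norm_cross3_sq ω x).gradient, cross3_smul_smul_sub_smul, neg_smul,
    neg_ne_zero, real_inner_comm]
  exact smul_ne_zero (mul_ne_zero (div_ne_zero (hg' _ hx) (norm_ne_zero_iff.2 hx0)) hxω)
    (cross3_ne_zero_of_sq_inner_lt hlt)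
end

section
/- Let c ≥ 0 and K ∈ ℝ, and let f : [0,1] → ℝ be continuous on [0,1] and differentiable on (0,1), with f'(t) ≤ c·(1 + f(t)) for all t ∈ (0,1) and f(0) − f(1) ≤ K. Then for every t ∈ [0,1]: f(t) ≤ K·e^c + (1 + ∫₀¹ |f(s)| ds)·e^{2c}. -/
set_option maxHeartbeats 800000


open Set Filter Topology

/-- Helper: cancel exponentials in an inequality. -/
lemma stmt16_aux (x y u v : ℝ) (h : x * Real.exp u ≤ y * Real.exp v) :
    x ≤ y * Real.exp (v - u) := by
  have hu := Real.exp_pos u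
  have hv : y * Real.exp v = (y * Real.exp (v - u)) * Real.exp u := by
    rw [mul_assoc, ← Real.exp_add]; ring_nf
  rw [hv] at h
  exact le_of_mul_le_mul_right h hu

/-- Abstract form of Step 2 of Lemma 3.1: if `f` is continuous on
`[0,1]`, differentiable on `(0,1)` with `f' ≤ c (1 + f)` there, and `f 0 - f 1 ≤ K`,
then `f t ≤ K e^c + (1 + ∫₀¹ |f|) e^{2c}` for every `t ∈ [0,1]`. -/
theorem stmt16 (c K : ℝ) (hc : 0 ≤ c) (f : ℝ → ℝ)
    (hf : ContinuousOn f (Set.Icc 0 1))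
    (hdiff : ∀ t ∈ Set.Ioo (0 : ℝ) 1, DifferentiableAt ℝ f t)
    (hineq : ∀ t ∈ Set.Ioo (0 : ℝ) 1, deriv f t ≤ c * (1 + f t))
    (hK : f 0 - f 1 ≤ K) :
    ∀ t ∈ Set.Icc (0 : ℝ) 1,
      f t ≤ K * Real.exp c + (1 + ∫ s in (0 : ℝ)..1, |f s|) * Real.exp (2 * c) := by
  have hgderiv : ∀ r ∈ Set.Ioo (0:ℝ) 1,
      HasDerivAt (fun r => (1 + f r) * Real.exp (-(c * r)))
        ((deriv f r) * Real.exp (-(c * r)) + (1 + f r) * (Real.exp (-(c * r)) * (-(c * 1)))) r := by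
    intro r hr
    have h1 : HasDerivAt (fun x : ℝ => -(c * x)) (-(c * 1)) r :=
      ((hasDerivAt_id r).const_mul c).neg
    have h2 := h1.exp
    have h3 : HasDerivAt (fun x => 1 + f x) (deriv f r) r :=
      ((hdiff r hr).hasDerivAt).const_add 1
    exact h3.mul h2
  have hmono : AntitoneOn (fun r => (1 + f r) * Real.exp (-(c * r))) (Set.Icc 0 1) := by
    apply antitoneOn_of_deriv_nonpos (convex_Icc 0 1)
    · exact (continuousOn_const.add hf).mul
        (Real.continuous_exp.comp (by continuity)).continuousOn
    · intro r hr
      rw [interior_Icc] at hr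
      exact ((hgderiv r hr).differentiableAt).differentiableWithinAt
    · intro r hr
      rw [interior_Icc] at hr
      rw [(hgderiv r hr).deriv]
      have hE : 0 < Real.exp (-(c * r)) := Real.exp_pos _
      have := hineq r hr
      nlinarith
  have h0mem : (0:ℝ) ∈ Set.Icc (0:ℝ) 1 := by norm_num
  have h1mem : (1:ℝ) ∈ Set.Icc (0:ℝ) 1 := by norm_num
  intro t ht
  -- pointwise bound for every s ∈ [0,1]
  have hpt : ∀ s ∈ Set.Icc (0:ℝ) 1,
      f t ≤ (K * Real.exp c + Real.exp (2 * c)) + Real.exp (2 * c) * |f s| := by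
    intro s hs
    have hgt0 : (1 + f t) * Real.exp (-(c * t)) ≤ (1 + f 0) * Real.exp (-(c * 0)) :=
      hmono h0mem ht ht.1
    have hg1s : (1 + f 1) * Real.exp (-(c * 1)) ≤ (1 + f s) * Real.exp (-(c * s)) :=
      hmono hs h1mem hs.2
    have hg10 : (1 + f 1) * Real.exp (-(c * 1)) ≤ (1 + f 0) * Real.exp (-(c * 0)) :=
      hmono h0mem h1mem zero_le_one
    have hA := stmt16_aux _ _ _ _ hgt0
    have hB := stmt16_aux _ _ _ _ hg1s
    have hC := stmt16_aux _ _ _ _ hg10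
    rw [show -(c * 0) - -(c * t) = c * t by ring] at hA
    rw [show -(c * s) - -(c * 1) = c - c * s by ring] at hB
    rw [show -(c * 0) - -(c * 1) = c by ring] at hC
    -- exponential facts
    have hE1 : (1:ℝ) ≤ Real.exp c := Real.one_le_exp hc
    have hEt1 : (1:ℝ) ≤ Real.exp (c * t) := Real.one_le_exp (by nlinarith [ht.1])
    have hEtE : Real.exp (c * t) ≤ Real.exp c := by
      apply Real.exp_le_exp.mpr; nlinarith [ht.2]
    have hEsE : Real.exp (c - c * s) ≤ Real.exp c := by
      apply Real.exp_le_exp.mpr; nlinarith [hs.1]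
    have hEspos : (0:ℝ) < Real.exp (c - c * s) := Real.exp_pos _
    have hEtpos : (0:ℝ) < Real.exp (c * t) := Real.exp_pos _
    have h2c : Real.exp (2 * c) = Real.exp c * Real.exp c := by
      rw [← Real.exp_add]; ring_nf
    have habs : f s ≤ |f s| := le_abs_self _
    have habs0 : (0:ℝ) ≤ |f s| := abs_nonneg _
    rw [h2c]
    rcases le_or_gt 0 (1 + f 0) with ha | ha
    · -- 1 + f 0 ≥ 0
      have hb : 1 + f 1 ≤ (1 + |f s|) * Real.exp c := by
        have h1 : (1 + f s) * Real.exp (c - c * s) ≤ (1 + |f s|) * Real.exp (c - c * s) := by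
          nlinarith
        have h2 : (1 + |f s|) * Real.exp (c - c * s) ≤ (1 + |f s|) * Real.exp c := by
          nlinarith
        linarith
      have h3 : 1 + f t ≤ (1 + f 0) * Real.exp c := by nlinarith
      have h4 : 1 + f 0 ≤ (1 + f 1) + K := by linarith
      have hE : (0:ℝ) < Real.exp c := Real.exp_pos c
      have h5 : (1 + f 0) * Real.exp c ≤ ((1 + f 1) + K) * Real.exp c :=
        mul_le_mul_of_nonneg_right h4 hE.le
      have h6 : ((1 + f 1) + K) * Real.exp c ≤ ((1 + |f s|) * Real.exp c + K) * Real.exp c :=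
        mul_le_mul_of_nonneg_right (by linarith) hE.le
      have h7 : 1 + f t ≤ ((1 + |f s|) * Real.exp c + K) * Real.exp c :=
        le_trans (le_trans h3 h5) h6
      nlinarith [h7]
    · -- 1 + f 0 < 0 : then f t < -1 and K ≥ 0
      have hft : 1 + f t ≤ 0 := by nlinarith
      have hb : 1 + f 1 ≤ 1 + f 0 := by nlinarith
      have hKnn : 0 ≤ K := by linarith
      nlinarith [Real.exp_pos c]
  -- integrate the pointwise bound over s ∈ [0,1]
  have hcontabs : ContinuousOn (fun s => |f s|) (Set.uIcc (0:ℝ) 1) := by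
    rw [Set.uIcc_of_le zero_le_one]; exact hf.abs
  have hint : IntervalIntegrable (fun s => |f s|) MeasureTheory.volume 0 1 :=
    hcontabs.intervalIntegrable
  have hintR : IntervalIntegrable
      (fun s => (K * Real.exp c + Real.exp (2 * c)) + Real.exp (2 * c) * |f s|)
      MeasureTheory.volume 0 1 :=
    intervalIntegrable_const.add (hint.const_mul _)
  have hmono' : (∫ (_ : ℝ) in (0:ℝ)..1, f t) ≤
      ∫ s in (0:ℝ)..1, ((K * Real.exp c + Real.exp (2 * c)) + Real.exp (2 * c) * |f s|) := by
    apply intervalIntegral.integral_mono_on zero_le_one intervalIntegrable_const hintR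
    intro s hs
    exact hpt s hs
  have hL : (∫ (_ : ℝ) in (0:ℝ)..1, f t) = f t := by simp
  have hR : (∫ s in (0:ℝ)..1, ((K * Real.exp c + Real.exp (2 * c)) + Real.exp (2 * c) * |f s|))
      = (K * Real.exp c + Real.exp (2 * c)) + Real.exp (2 * c) * ∫ s in (0:ℝ)..1, |f s| := by
    rw [intervalIntegral.integral_add intervalIntegrable_const (hint.const_mul _),
      intervalIntegral.integral_const_mul, intervalIntegral.integral_const]
    simp
  rw [hL, hR] at hmono'
  linarith [hmono']
end

section
/- Let c₀, c₁ > 0, Θ > 0, β ≥ 0, μ̄ ≥ 0, and let ε, σ : (0,∞)² → ℝ satisfy ε(ρ,θ) ≥ c₀·(ρ^{5/3} + θ⁴) and 0 ≤ σ(ρ,θ) ≤ c₁·(1 + θ³ + ρ + ρ·log⁺θ) for all ρ, θ > 0, where log⁺x := max(0, log x). For ρ, θ > 0, u, B ∈ ℝ³, θ̄ ∈ (0, Θ], B_B ∈ ℝ³ with |B_B| ≤ β, and M̄ ∈ [−μ̄, μ̄], define E := (1/2)ρ|u|² + ε(ρ,θ) + (1/2)|B|² and F := E − θ̄·σ(ρ,θ)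 − B_B·B − ρ·M̄. Then for every λ > 1 there exist constants C₁, C₂ > 0, depending only on λ, c₀, c₁, Θ, β, μ̄, such that λ^{−1}·E − C₁ ≤ F ≤ λ·E + C₂ for all such ρ, θ, u, B, θ̄, B_B, M̄. -/
/-!
The correction `F - E = -(θ̄ σ + B_B · B + ρ M̄)` is bounded, using `log⁺ θ ≤ θ`, by
`(Θ c₁ + μ̄) (1 + θ³ + ρ + ρ θ) + β |B|`, and each of these terms grows strictly slower than the
coercive part `c₀ (ρ^{5/3} + θ⁴) + |B|² / 2` of `E`; the mixed term `ρ θ` is split by Young's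
inequality with exponents `5/3` and `5/2`, and `5/2 < 4`. So for every `δ > 0` the correction is at
most `δ E + C_δ`, and `δ = 1 - λ⁻¹`, `δ = λ - 1` give the two bounds.
-/

open Real

namespace Real

theorem exists_mul_rpow_le_mul_rpow_add {p q : ℝ} (hp : 0 ≤ p) (hpq : p < q) {a : ℝ} (ha : 0 < a)
    {K : ℝ} (hK : 0 ≤ K) : ∃ C, ∀ x, 0 ≤ x → K * x ^ p ≤ a * x ^ q + C := by
  set M := (K / a) ^ (q - p)⁻¹
  have hM : 0 ≤ M := by positivity
  refine ⟨K * M ^ p, fun x hx => ?_⟩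
  rcases le_total x M with hxM | hMx
  · have : x ^ p ≤ M ^ p := rpow_le_rpow hx hxM hp
    nlinarith [rpow_nonneg hx q]
  · have hK_le : K ≤ a * x ^ (q - p) := by
      calc K = a * M ^ (q - p) := by
            rw [rpow_inv_rpow (by positivity) (by linarith)]; field_simp
        _ ≤ a * x ^ (q - p) := by gcongr
    have hsplit : x ^ q = x ^ (q - p) * x ^ p := by
      rw [← rpow_add' hx (by linarith), sub_add_cancel]
    calc K * x ^ p ≤ a * x ^ (q - p) * x ^ p := by gcongr
      _ = a * x ^ q := by rw [hsplit, mul_assoc]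
      _ ≤ a * x ^ q + K * M ^ p := by simp only [le_add_iff_nonneg_right]; positivity

theorem young_inequality_of_nonneg_eps {p q : ℝ} (hpq : p.HolderConjugate q) {ε : ℝ}
    (hε : 0 < ε) : ∃ C, 0 < C ∧ ∀ a b, 0 ≤ a → 0 ≤ b → a * b ≤ ε * a ^ p + C * b ^ q := by
  set s := ε ^ p⁻¹
  have hs : 0 < s := by positivity
  refine ⟨(s ^ q)⁻¹, by positivity, fun a b ha hb => ?_⟩
  have hsp : s ^ p = ε := rpow_inv_rpow hε.le hpq.ne_zero
  calc a * b = (s * a) * (b / s) := by field_simp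
    _ ≤ (s * a) ^ p / p + (b / s) ^ q / q :=
        young_inequality_of_nonneg (by positivity) (by positivity) hpq
    _ ≤ (s * a) ^ p + (b / s) ^ q := by
        gcongr
        · exact div_le_self (by positivity) hpq.lt.le
        · exact div_le_self (by positivity) hpq.symm.lt.le
    _ = ε * a ^ p + (s ^ q)⁻¹ * b ^ q := by
        rw [mul_rpow hs.le ha, div_rpow hb hs.le, hsp, div_eq_inv_mul]

theorem exists_mul_mul_le_rpow_add_rpow {p r q : ℝ} (hpr : p.HolderConjugate r) (hrq : r < q)
    {a : ℝ} (ha : 0 < a) {K : ℝ} (hK : 0 ≤ K) :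
    ∃ C, ∀ x y, 0 ≤ x → 0 ≤ y → K * (x * y) ≤ a * x ^ p + a * y ^ q + C := by
  obtain ⟨D, hD, hyoung⟩ := young_inequality_of_nonneg_eps hpr (ε := a / (K + 1)) (by positivity)
  obtain ⟨C, hC⟩ :=
    exists_mul_rpow_le_mul_rpow_add hpr.symm.nonneg hrq ha (K := K * D) (by positivity)
  refine ⟨C, fun x y hx hy => ?_⟩
  have hKε : K * (a / (K + 1)) ≤ a := by
    rw [mul_div_assoc', div_le_iff₀ (by positivity)]; nlinarith
  calc K * (x * y) ≤ K * (a / (K + 1) * x ^ p + D * y ^ r) := by gcongr; exact hyoung x y hx hy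
    _ = K * (a / (K + 1)) * x ^ p + K * D * y ^ r := by ring
    _ ≤ a * x ^ p + (a * y ^ q + C) := by gcongr; exact hC y hy
    _ = a * x ^ p + a * y ^ q + C := by ring

end Real

theorem exists_mul_entropy_majorant_le {K a : ℝ} (hK : 0 ≤ K) (ha : 0 < a) :
    ∃ C, ∀ ρ θ, 0 ≤ ρ → 0 ≤ θ →
      K * (1 + θ ^ 3 + ρ + ρ * θ) ≤ a * (ρ ^ ((5 : ℝ) / 3) + θ ^ 4) + C := by
  obtain ⟨C₁, hθ₃⟩ := exists_mul_rpow_le_mul_rpow_add (p := 3) (q := 4) (by norm_num) (by norm_num)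
    (half_pos ha) hK
  obtain ⟨C₂, hρ₁⟩ := exists_mul_rpow_le_mul_rpow_add (p := 1) (q := 5 / 3) (by norm_num)
    (by norm_num) (half_pos ha) hK
  obtain ⟨C₃, hρθ⟩ := exists_mul_mul_le_rpow_add_rpow (p := 5 / 3) (r := 5 / 2) (q := 4)
    ⟨by norm_num, by norm_num, by norm_num⟩ (by norm_num) (half_pos ha) hK
  refine ⟨K + C₁ + C₂ + C₃, fun ρ θ hρ hθ => ?_⟩
  have h₁ := hθ₃ θ hθ
  have h₂ := hρ₁ ρ hρ
  have h₃ := hρθ ρ θ hρ hθ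
  simp only [rpow_ofNat, rpow_one] at h₁ h₂ h₃
  linarith

section FreeEnergy

variable {F : Type*} [NormedAddCommGroup F] [InnerProductSpace ℝ F]

theorem abs_free_energy_correction_le {c₁ Θ β μ ρ θ s θbar Mbar : ℝ} {BB B : F} (hc₁ : 0 ≤ c₁)
    (hρ : 0 ≤ ρ) (hθ : 0 ≤ θ) (hs₀ : 0 ≤ s)
    (hs : s ≤ c₁ * (1 + θ ^ 3 + ρ + ρ * max 0 (log θ))) (hθbar : 0 ≤ θbar) (hθbarΘ : θbar ≤ Θ)
    (hBB : ‖BB‖ ≤ β) (hMbar : |Mbar| ≤ μ) :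
    |θbar * s + inner ℝ BB B + ρ * Mbar| ≤ (Θ * c₁ + μ) * (1 + θ ^ 3 + ρ + ρ * θ) + β * ‖B‖ := by
  have hnonneg : 0 ≤ 1 + θ ^ 3 + ρ * θ := by positivity
  have hs' : s ≤ c₁ * (1 + θ ^ 3 + ρ + ρ * θ) :=
    hs.trans (by gcongr; exact max_le hθ (log_le_self hθ))
  have hentropy : |θbar * s| ≤ Θ * c₁ * (1 + θ ^ 3 + ρ + ρ * θ) := by
    rw [abs_of_nonneg (by positivity), mul_assoc]
    exact mul_le_mul hθbarΘ hs' hs₀ (hθbar.trans hθbarΘ)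
  have hmagnetic : |inner ℝ BB B| ≤ β * ‖B‖ :=
    (abs_real_inner_le_norm BB B).trans (by gcongr)
  have hpotential : |ρ * Mbar| ≤ μ * (1 + θ ^ 3 + ρ + ρ * θ) := by
    rw [abs_mul, abs_of_nonneg hρ]
    nlinarith [abs_nonneg Mbar]
  calc |θbar * s + inner ℝ BB B + ρ * Mbar| ≤ |θbar * s| + |inner ℝ BB B| + |ρ * Mbar| :=
        abs_add_three _ _ _
    _ ≤ _ := by linarith

theorem exists_abs_free_energy_correction_le {c₀ c₁ Θ β μ : ℝ} (hc₀ : 0 < c₀) (hc₁ : 0 ≤ c₁)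
    (hΘ : 0 ≤ Θ) (hβ : 0 ≤ β) (hμ : 0 ≤ μ) {ε σ : ℝ → ℝ → ℝ}
    (hε : ∀ ρ θ : ℝ, 0 < ρ → 0 < θ → c₀ * (ρ ^ ((5 : ℝ) / 3) + θ ^ 4) ≤ ε ρ θ)
    (hσ : ∀ ρ θ : ℝ, 0 < ρ → 0 < θ →
      0 ≤ σ ρ θ ∧ σ ρ θ ≤ c₁ * (1 + θ ^ 3 + ρ + ρ * max 0 (log θ)))
    {δ : ℝ} (hδ : 0 < δ) :
    ∃ C, 0 < C ∧ ∀ (ρ θ θbar Mbar : ℝ) (u B BB : F),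
      0 < ρ → 0 < θ → 0 < θbar → θbar ≤ Θ → ‖BB‖ ≤ β → |Mbar| ≤ μ →
        |θbar * σ ρ θ + inner ℝ BB B + ρ * Mbar| ≤
          δ * ((1 / 2) * ρ * ‖u‖ ^ 2 + ε ρ θ + (1 / 2) * ‖B‖ ^ 2) + C := by
  obtain ⟨C₁, hentropy⟩ :=
    exists_mul_entropy_majorant_le (K := Θ * c₁ + μ) (by positivity) (mul_pos hδ hc₀)
  obtain ⟨C₂, hmagnetic⟩ :=
    exists_mul_rpow_le_mul_rpow_add (p := 1) (q := 2) (by norm_num) (by norm_num) (half_pos hδ) hβ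
  refine ⟨max C₁ 0 + max C₂ 0 + 1, by positivity, ?_⟩
  intro ρ θ θbar Mbar u B BB hρ hθ hθbar hθbarΘ hBB hMbar
  have hcorr := abs_free_energy_correction_le (B := B) hc₁ hρ.le hθ.le (hσ ρ θ hρ hθ).1
    (hσ ρ θ hρ hθ).2 hθbar.le hθbarΘ hBB hMbar
  have hcoercive : c₀ * (ρ ^ ((5 : ℝ) / 3) + θ ^ 4) + (1 / 2) * ‖B‖ ^ 2 ≤
      (1 / 2) * ρ * ‖u‖ ^ 2 + ε ρ θ + (1 / 2) * ‖B‖ ^ 2 := by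
    have := hε ρ θ hρ hθ
    have : 0 ≤ (1 / 2) * ρ * ‖u‖ ^ 2 := by positivity
    linarith
  have h₁ := hentropy ρ θ hρ.le hθ.le
  have h₂ := hmagnetic ‖B‖ (norm_nonneg B)
  simp only [rpow_one, rpow_ofNat] at h₂
  have := mul_le_mul_of_nonneg_left hcoercive hδ.le
  linarith [le_max_left C₁ 0, le_max_left C₂ 0]

end FreeEnergy

/-- The pointwise two-sided comparison (AS30) between the total
energy density `E = (1/2)ρ|u|² + ε(ρ,θ) + (1/2)|B|²` and the ballistic free-energy
density `F = E - θ̄ σ(ρ,θ) - B_B·B - ρ M̄`: for every `λ > 1` there are constants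
`C₁, C₂ > 0`, depending only on `λ, c₀, c₁, Θ, β, μ̄`, with
`λ⁻¹ E - C₁ ≤ F ≤ λ E + C₂` whenever `ρ, θ > 0`, `θ̄ ∈ (0,Θ]`, `|B_B| ≤ β`,
`|M̄| ≤ μ̄`. -/
theorem stmt18 (c₀ c₁ Θ β μ : ℝ) (hc₀ : 0 < c₀) (hc₁ : 0 < c₁) (hΘ : 0 < Θ)
    (hβ : 0 ≤ β) (hμ : 0 ≤ μ)
    (ε σ : ℝ → ℝ → ℝ)
    (hε : ∀ ρ θ : ℝ, 0 < ρ → 0 < θ → c₀ * (ρ ^ ((5 : ℝ) / 3) + θ ^ 4) ≤ ε ρ θ)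
    (hσ : ∀ ρ θ : ℝ, 0 < ρ → 0 < θ →
      0 ≤ σ ρ θ ∧ σ ρ θ ≤ c₁ * (1 + θ ^ 3 + ρ + ρ * max 0 (Real.log θ))) :
    ∀ lam : ℝ, 1 < lam → ∃ C₁ C₂ : ℝ, 0 < C₁ ∧ 0 < C₂ ∧
      ∀ (ρ θ θbar Mbar : ℝ) (u B BB : EuclideanSpace ℝ (Fin 3)),
        0 < ρ → 0 < θ → 0 < θbar → θbar ≤ Θ → ‖BB‖ ≤ β → |Mbar| ≤ μ →
        lam⁻¹ * ((1 / 2) * ρ * ‖u‖ ^ 2 + ε ρ θ + (1 / 2) * ‖B‖ ^ 2) - C₁ ≤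
            ((1 / 2) * ρ * ‖u‖ ^ 2 + ε ρ θ + (1 / 2) * ‖B‖ ^ 2) -
              θbar * σ ρ θ - (@inner ℝ _ _ BB B) - ρ * Mbar ∧
          ((1 / 2) * ρ * ‖u‖ ^ 2 + ε ρ θ + (1 / 2) * ‖B‖ ^ 2) -
              θbar * σ ρ θ - (@inner ℝ _ _ BB B) - ρ * Mbar ≤
            lam * ((1 / 2) * ρ * ‖u‖ ^ 2 + ε ρ θ + (1 / 2) * ‖B‖ ^ 2) + C₂ := by
  intro lam hlam
  have hδ₁ : 0 < 1 - lam⁻¹ := sub_pos.2 (inv_lt_one_of_one_lt₀ hlam)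
  have hcorr := fun {δ : ℝ} (hδ : 0 < δ) => exists_abs_free_energy_correction_le
    (F := EuclideanSpace ℝ (Fin 3)) hc₀ hc₁.le hΘ.le hβ hμ hε hσ hδ
  obtain ⟨C₁, hC₁, hlower⟩ := hcorr hδ₁
  obtain ⟨C₂, hC₂, hupper⟩ := hcorr (sub_pos.2 hlam)
  refine ⟨C₁, C₂, hC₁, hC₂, fun ρ θ θbar Mbar u B BB hρ hθ hθbar hθbarΘ hBB hMbar => ?_⟩
  have h₁ := abs_le.1 (hlower ρ θ θbar Mbar u B BB hρ hθ hθbar hθbarΘ hBB hMbar)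
  have h₂ := abs_le.1 (hupper ρ θ θbar Mbar u B BB hρ hθ hθbar hθbarΘ hBB hMbar)
  constructor <;> linarith [h₁.2, h₂.1]
end
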